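/- For a strictly convex differentiable function f : ℝ^p → ℝ and A, b defining feasible equality constraints, a point x with Ax = b is the unique minimizer of f over {z : Az = b} if and only if there exists ν ∈ ℝ^q with ∇f(x) + Aᵀν = 0. -/

import Mathlib

/-!
The feasible set is the affine subspace `x + ker A`. For convex `f`, the point `x` minimizes `f`
on it iff `∇f x` is orthogonal to `ker A` (first-order condition along lines through `x`), and
`(ker A)ᗮ = range Aᵀ` turns this into the multiplier `ν`. Strict convexity makes the minimizer
unique.
-/

open InnerProductSpace Matrix

section FirstOrder

variable {E : Type*} [NormedAddCommGroup E] [NormedSpace ℝ E] {f : E → ℝ} {f' : E →L[ℝ] ℝ}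
  {x y : E}

theorem ConvexOn.add_le_of_hasFDerivAt {s : Set E} (hf : ConvexOn ℝ s f) (hx : x ∈ s)
    (hy : y ∈ s) (hf' : HasFDerivAt f f' x) : f x + f' (y - x) ≤ f y := by
  let γ : ℝ →ᵃ[ℝ] E := AffineMap.lineMap x y
  have hline : ConvexOn ℝ (γ ⁻¹' s) (f ∘ γ) := hf.comp_affineMap γ
  have hderiv : HasDerivAt (f ∘ γ) (f' (y - x)) 0 :=
    HasFDerivAt.comp_hasDerivAt (0 : ℝ) (by simpa [γ] using hf') AffineMap.hasDerivAt_lineMap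
  have := hline.le_slope_of_hasDerivAt (by simpa [γ] using hx) (by simpa [γ] using hy)
    zero_lt_one hderiv
  simp only [slope, γ, Function.comp_apply, AffineMap.lineMap_apply_one,
    AffineMap.lineMap_apply_zero, sub_zero, inv_one, one_mul, vsub_eq_sub, smul_eq_mul] at this
  linarith

theorem ConvexOn.isMinOn_affineSubspace_iff (P : AffineSubspace ℝ E) (hf : ConvexOn ℝ P f)
    (hx : x ∈ P) (hf' : HasFDerivAt f f' x) :
    IsMinOn f P x ↔ ∀ v ∈ P.direction, f' v = 0 := by
  constructor
  · intro hmin v hv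
    have mem_cone : ∀ w ∈ P.direction, w ∈ posTangentConeAt (P : Set E) x := fun w hw =>
      mem_posTangentConeAt_of_segment_subset <| P.convex.segment_subset hx <| by
        simpa [add_comm] using AffineSubspace.vadd_mem_of_mem_direction hw hx
    exact hmin.localize.hasFDerivWithinAt_eq_zero hf'.hasFDerivWithinAt (mem_cone v hv)
      (mem_cone (-v) (P.direction.neg_mem hv))
  · intro horth z hz
    have := hf.add_le_of_hasFDerivAt hx hz hf'
    rwa [← vsub_eq_sub, horth _ (AffineSubspace.vsub_mem_direction hz hx), add_zero] at this

end FirstOrder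

theorem Matrix.orthogonal_ker_toEuclideanLin {𝕜 m n : Type*} [RCLike 𝕜] [Fintype m]
    [DecidableEq m] [Fintype n] [DecidableEq n] (A : Matrix m n 𝕜) :
    (LinearMap.ker (toEuclideanLin A))ᗮ = LinearMap.range (toEuclideanLin Aᴴ) := by
  rw [LinearMap.orthogonal_ker, toEuclideanLin_conjTranspose_eq_adjoint]

theorem optimality_condition_general (p q : ℕ)
    (f : EuclideanSpace ℝ (Fin p) → ℝ)
    (g : EuclideanSpace ℝ (Fin p) → EuclideanSpace ℝ (Fin p))
    (hgrad : ∀ z, HasGradientAt f (g z) z)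
    (hconv : StrictConvexOn ℝ Set.univ f)
    (A : Matrix (Fin q) (Fin p) ℝ) (b : Fin q → ℝ)
    (x : EuclideanSpace ℝ (Fin p)) (hx : A.mulVec x = b) :
    ((∀ z : EuclideanSpace ℝ (Fin p), A.mulVec z = b → f x ≤ f z) ∧
     (∀ z : EuclideanSpace ℝ (Fin p), A.mulVec z = b → f z ≤ f x → z = x)) ↔
      ∃ ν : Fin q → ℝ, ∀ i, g x i + A.transpose.mulVec ν i = 0 := by
  set P := AffineSubspace.mk' x (LinearMap.ker (toEuclideanLin A))
  have hP : ∀ z : EuclideanSpace ℝ (Fin p), A *ᵥ z = b ↔ z ∈ (P : Set _) := fun z => by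
    rw [SetLike.mem_coe, AffineSubspace.mem_mk', LinearMap.mem_ker, vsub_eq_sub, map_sub,
      sub_eq_zero, ← hx]
    exact (WithLp.toLp_injective 2).eq_iff.symm
  have hconvP : StrictConvexOn ℝ P f := hconv.subset (Set.subset_univ _) P.convex
  have hmin_iff : IsMinOn f P x ↔ g x ∈ LinearMap.range (toEuclideanLin Aᵀ) := by
    rw [hconvP.convexOn.isMinOn_affineSubspace_iff P (AffineSubspace.self_mem_mk' _ _)
      (hasGradientAt_iff_hasFDerivAt.mp (hgrad x)), AffineSubspace.direction_mk',
      ← conjTranspose_eq_transpose_of_trivial, ← orthogonal_ker_toEuclideanLin,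
      Submodule.mem_orthogonal']
    simp only [toDual_apply_apply]
  have hmin_unique (hmin : IsMinOn f P x) (z : EuclideanSpace ℝ (Fin p)) (hz : z ∈ (P : Set _))
      (hle : f z ≤ f x) : z = x :=
    hconvP.eq_of_isMinOn (fun w hw => hle.trans (hmin hw)) hmin hz
      (AffineSubspace.self_mem_mk' _ _)
  simp only [hP, ← isMinOn_iff]
  rw [and_iff_left_of_imp hmin_unique, hmin_iff]
  constructor
  · rintro ⟨ν, hν⟩
    refine ⟨-ν.ofLp, fun i => ?_⟩
    simp [← hν, mulVec_neg]
  · rintro ⟨ν, hν⟩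
    refine ⟨WithLp.toLp 2 (-ν), ?_⟩
    ext i
    simpa [mulVec_neg, neg_eq_iff_add_eq_zero, add_comm] using hν i

/-- For a differentiable strictly convex `f`, a feasible point `x` (with `A x = b`) is
the unique minimizer of `f` over `{z | A z = b}` iff there is a multiplier `ν` with
`∇f x + Aᵀ ν = 0`. -/
theorem optimality_condition (p q : ℕ)
    (f : EuclideanSpace ℝ (Fin p) → ℝ)
    (g : EuclideanSpace ℝ (Fin p) → EuclideanSpace ℝ (Fin p))
    (hgrad : ∀ z, HasGradientAt f (g z) z)
    (hconv : StrictConvexOn ℝ Set.univ f)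
    (A : Matrix (Fin q) (Fin p) ℝ) (b : Fin q → ℝ)
    (hfeas : ∃ z : EuclideanSpace ℝ (Fin p), A.mulVec z = b)
    (x : EuclideanSpace ℝ (Fin p)) (hx : A.mulVec x = b) :
    ((∀ z : EuclideanSpace ℝ (Fin p), A.mulVec z = b → f x ≤ f z) ∧
     (∀ z : EuclideanSpace ℝ (Fin p), A.mulVec z = b → f z ≤ f x → z = x)) ↔
      ∃ ν : Fin q → ℝ, ∀ i, g x i + A.transpose.mulVec ν i = 0 :=
  optimality_condition_general p q f g hgrad hconv A b x hx
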